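/- Let t ≥ 2 and m ≥ 2 be integers, and let T be a Hamiltonian cycle of the t-subdivided prism G of K_m that contains every vertical edge of G. Then the set of bottom edges of T, i.e. { {a,b} : (u_a^1, u_b^1) ∈ E(T) }, is a perfect matching of K_m. -/

import Mathlib

open SimpleGraph Finset

attribute [local instance] Classical.propDecidable

/-- An edge `e` crosses the vertex set `S` if it has an endpoint in `S`
and an endpoint outside `S`. -/
def crossing {V : Type*} (S : Finset V) (e : Sym2 V) : Prop :=
  (∃ a ∈ e, a ∈ S) ∧ (∃ a ∈ e, a ∉ S)

/-- A comb with handle `H` and teeth `T 0, …, T (k-1)`. -/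
def IsComb {V : Type*} [Fintype V] [DecidableEq V]
    (H : Finset V) {k : ℕ} (T : Fin k → Finset V) : Prop :=
  3 ≤ k ∧ Odd k ∧
  (∀ i j, i ≠ j → Disjoint (T i) (T j)) ∧
  (∀ i, (H ∩ T i).Nonempty) ∧
  (H \ Finset.univ.biUnion T).Nonempty

/-- An `(h,t)`-uniform comb: every tooth has size `t` and meets the handle
in exactly `h` vertices. -/
def IsUniformComb {V : Type*} [Fintype V] [DecidableEq V] (h t : ℕ)
    (H : Finset V) {k : ℕ} (T : Fin k → Finset V) : Prop :=
  IsComb H T ∧ ∀ i, (T i).card = t ∧ (H ∩ T i).card = h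

/-- The `t`-subdivided prism over `K_m`: vertex `(i, j)` is the copy of
vertex `i` in layer `j` (layer `0` is the bottom, layer `t-1` the top).
There are complete graphs on the bottom and top layers, and vertical paths
joining consecutive layers in each column. -/
def subPrism (m t : ℕ) : SimpleGraph (Fin m × Fin t) :=
  SimpleGraph.fromRel (fun p q =>
    (p.2.val = 0 ∧ q.2.val = 0 ∧ p.1 ≠ q.1) ∨
    (p.2.val = t - 1 ∧ q.2.val = t - 1 ∧ p.1 ≠ q.1) ∨
    (p.1 = q.1 ∧ p.2.val + 1 = q.2.val))

/-- A perfect matching of `K_m`, given as a set of (non-loop) edges such that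
every vertex belongs to exactly one of them. -/
def IsPerfectMatchingKm (m : ℕ) (M : Finset (Sym2 (Fin m))) : Prop :=
  (∀ e ∈ M, ¬ e.IsDiag) ∧ ∀ v : Fin m, ∃! e, e ∈ M ∧ v ∈ e

/-!
Every vertex of a cycle has exactly two neighbours on it. At a bottom vertex `u_a^1` one of them
is `u_a^2`, reached by the vertical edge, so the other is a neighbour of the only remaining kind:
a bottom vertex `u_b^1`. Thus every `a` has exactly one bottom partner `b`, and the partner
relation is symmetric and irreflexive.
-/

theorem SimpleGraph.Walk.IsCycle.existsUnique_adj_toSubgraph_ne {V : Type*} {G : SimpleGraph V}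
    {u x y : V} {p : G.Walk u u} (hp : p.IsCycle) (hxy : p.toSubgraph.Adj x y) :
    ∃! z, p.toSubgraph.Adj x z ∧ z ≠ y := by
  obtain ⟨a, b, hab, hN⟩ := Set.ncard_eq_two.mp
    (hp.ncard_neighborSet_toSubgraph_eq_two (p.mem_verts_toSubgraph.mp hxy.fst_mem))
  have hadj : ∀ z, p.toSubgraph.Adj x z ↔ z = a ∨ z = b := fun z => Set.ext_iff.mp hN z
  rcases (hadj y).mp hxy with rfl | rfl
  · exact ⟨b, ⟨(hadj b).mpr (Or.inr rfl), hab.symm⟩,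
      fun z hz => ((hadj z).mp hz.1).resolve_left hz.2⟩
  · exact ⟨a, ⟨(hadj a).mpr (Or.inl rfl), hab⟩,
      fun z hz => ((hadj z).mp hz.1).resolve_right hz.2⟩

theorem isPerfectMatchingKm_of_existsUnique {m : ℕ} (r : Fin m → Fin m → Prop)
    (hsymm : ∀ a b, r a b → r b a) (hirrefl : ∀ a, ¬ r a a) (h : ∀ a, ∃! b, r a b)
    {M : Finset (Sym2 (Fin m))} (hM : ∀ e, e ∈ M ↔ ∃ a b, e = s(a, b) ∧ r a b) :
    IsPerfectMatchingKm m M := by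
  refine ⟨?_, fun a => ?_⟩
  · rintro e he hdiag
    obtain ⟨a, b, rfl, hab⟩ := (hM e).mp he
    exact hirrefl a (Sym2.mk_isDiag_iff.mp hdiag ▸ hab)
  obtain ⟨b, hab, huniq⟩ := h a
  refine ⟨s(a, b), ⟨(hM _).mpr ⟨a, b, rfl, hab⟩, Sym2.mem_mk_left a b⟩, ?_⟩
  rintro e ⟨he, hae⟩
  obtain ⟨c, d, rfl, hcd⟩ := (hM e).mp he
  rcases Sym2.mem_iff.mp hae with rfl | rfl
  · rw [huniq _ hcd]
  · rw [huniq _ (hsymm _ _ hcd), Sym2.eq_swap]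

theorem subPrism_adj_bottom_cases {m t : ℕ} (ht : 1 < t) {a : Fin m} {z : Fin m × Fin t}
    (h : (subPrism m t).Adj (a, ⟨0, by omega⟩) z) :
    z = (a, ⟨1, ht⟩) ∨ (z.2 : ℕ) = 0 := by
  obtain ⟨b, j, hj⟩ := z
  simp only [subPrism, fromRel_adj] at h
  rcases h.2 with (h | h | h) | (h | h | h) <;>
    simp only [Prod.mk.injEq, Fin.ext_iff] at * <;> omega

theorem existsUnique_bottom_edge_of_isCycle {m t : ℕ} (ht : 1 < t) {v : Fin m × Fin t}
    {C : (subPrism m t).Walk v v} (hC : C.IsCycle) {a : Fin m}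
    (hvert : s((a, ⟨0, by omega⟩), (a, ⟨1, ht⟩)) ∈ C.edges) :
    ∃! b, s(((a, ⟨0, by omega⟩) : Fin m × Fin t), (b, ⟨0, by omega⟩)) ∈ C.edges := by
  obtain ⟨z, ⟨hz, hzy⟩, huniq⟩ :=
    hC.existsUnique_adj_toSubgraph_ne (C.mem_edges_toSubgraph.mpr hvert)
  have hz0 : z = (z.1, ⟨0, by omega⟩) :=
    Prod.ext rfl (Fin.ext ((subPrism_adj_bottom_cases ht hz.adj_sub).resolve_left hzy))
  refine ⟨z.1, C.mem_edges_toSubgraph.mp (hz0 ▸ hz), fun b hb => ?_⟩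
  exact congrArg Prod.fst <| huniq (b, ⟨0, by omega⟩)
    ⟨C.mem_edges_toSubgraph.mpr hb, by simp [Prod.ext_iff, Fin.ext_iff]⟩

theorem bottom_edges_of_tour_form_perfect_matching (t m : ℕ) (ht : 2 ≤ t)
    (v : Fin m × Fin t) (C : (subPrism m t).Walk v v) (hC : C.IsHamiltonianCycle)
    (hvert : ∀ (i : Fin m) (j : ℕ) (hj : j + 1 < t),
      s(((i, ⟨j, by omega⟩) : Fin m × Fin t), (i, ⟨j + 1, hj⟩)) ∈ C.edges) :
    IsPerfectMatchingKm m
      (Finset.univ.filter (fun e : Sym2 (Fin m) => ∃ a b : Fin m, e = s(a, b) ∧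
        s(((a, ⟨0, by omega⟩) : Fin m × Fin t), (b, ⟨0, by omega⟩)) ∈ C.edges)) := by
  have hbottom : ∀ a : Fin m, ∃! b : Fin m,
      s(((a, ⟨0, by omega⟩) : Fin m × Fin t), (b, ⟨0, by omega⟩)) ∈ C.edges :=
    fun a => existsUnique_bottom_edge_of_isCycle ht hC.isCycle (hvert a 0 ht)
  refine isPerfectMatchingKm_of_existsUnique _ (fun a b hab => by rwa [Sym2.eq_swap])
    (fun a haa => ?_) hbottom (fun e => by simp only [mem_filter, mem_univ, true_and])
  exact (subPrism m t).not_isDiag_of_mem_edgeSet (C.edges_subset_edgeSet haa)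
    (Sym2.mk_isDiag_iff.mpr rfl)
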